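/- Let M, K be symmetric n×n real matrices, α_R, β_R ≥ 0, C = α_R • M + β_R • K, and let φ ∈ ℝⁿ, ω > 0 satisfy (K − ω² M) φ = 0 and φᵀ M φ = 1. Let Λ, λ_j ∈ ℂ with Λ² + (α_R + β_R ω²) Λ + ω² = 0 (exact resonance) and Λ + λ_j + α_R + β_R ω² ≠ 0. Suppose w, c ∈ ℂⁿ and R ∈ ℂ satisfy the cohomological equation (K + Λ • C + Λ² • M) w = c + R • D, where D = −((Λ + λ_j) • M + C) φ. Then R = (φᵀ c) / (Λ + λ_j + α_R + β_R ω²). -/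
import Mathlib

open Matrix Complex

/-- Solvability condition of the cohomological equation at exact resonance:
if `(K + Λ C + Λ² M) w = c + R D` with `D = −((Λ + λ_j) M + C) φ`, where `Λ`
satisfies the resonant characteristic equation, then the reduced-dynamics
coefficient is `R = φᵀ c / (Λ + λ_j + α_R + β_R ω²)`. -/
theorem reduced_dynamics_coefficient (n : ℕ)
    (M K : Matrix (Fin n) (Fin n) ℝ) (hMsymm : M.IsSymm) (hKsymm : K.IsSymm)
    (αR βR : ℝ) (hαR : 0 ≤ αR) (hβR : 0 ≤ βR)
    (C : Matrix (Fin n) (Fin n) ℝ) (hC : C = αR • M + βR • K)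
    (φ : Fin n → ℝ) (ω : ℝ) (hω : 0 < ω)
    (heig : (K - ω ^ 2 • M).mulVec φ = 0)
    (hMnorm : φ ⬝ᵥ M.mulVec φ = 1)
    (Λ lamj : ℂ) (hΛ : Λ ^ 2 + (αR + βR * ω ^ 2) * Λ + ω ^ 2 = 0)
    (hne : Λ + lamj + αR + βR * ω ^ 2 ≠ 0)
    (w c : Fin n → ℂ) (R : ℂ) (D : Fin n → ℂ)
    (hD : D = -(((Λ + lamj) • M.map (Complex.ofReal) +
        C.map (Complex.ofReal)).mulVec (fun i => (φ i : ℂ))))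
    (hcoh : (K.map (Complex.ofReal) + Λ • C.map (Complex.ofReal) +
        Λ ^ 2 • M.map (Complex.ofReal)).mulVec w = c + R • D) :
    R = ((fun i => (φ i : ℂ)) ⬝ᵥ c) / (Λ + lamj + αR + βR * ω ^ 2) := by
  set φc : Fin n → ℂ := fun i => (φ i : ℂ) with hφc
  set Mc := M.map (Complex.ofReal)
  set Kc := K.map (Complex.ofReal)
  set Cc := C.map (Complex.ofReal)
  -- eigen relation over ℂ
  have hmap : ∀ A : Matrix (Fin n) (Fin n) ℝ,
      (A.map Complex.ofReal).mulVec φc = fun i => ((A.mulVec φ) i : ℂ) := by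
    intro A
    funext i
    simp only [Matrix.mulVec, dotProduct, Matrix.map_apply, φc]
    push_cast
    rfl
  have heigc : Kc.mulVec φc = (ω ^ 2 : ℂ) • Mc.mulVec φc := by
    have h : K.mulVec φ = (ω ^ 2 : ℝ) • M.mulVec φ := by
      have := heig
      rw [Matrix.sub_mulVec, sub_eq_zero] at this
      simpa [Matrix.smul_mulVec] using this
    rw [show Kc = K.map Complex.ofReal from rfl, show Mc = M.map Complex.ofReal from rfl,
      hmap, hmap]
    funext i
    have := congrArg Complex.ofReal (congrFun h i)
    simp only [Pi.smul_apply, smul_eq_mul] at this ⊢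
    push_cast at this
    exact this
  have hMc : Mc.mulVec φc = fun i => ((M.mulVec φ) i : ℂ) := hmap M
  have hCc : Cc.mulVec φc = ((αR : ℂ) + βR * ω ^ 2) • Mc.mulVec φc := by
    have : Cc = (αR : ℂ) • Mc + (βR : ℂ) • Kc := by
      subst hC
      ext i j
      simp [Mc, Kc, Cc, Matrix.map_apply]
    rw [this, Matrix.add_mulVec, Matrix.smul_mulVec, Matrix.smul_mulVec,
      heigc, smul_smul, add_smul]
  -- L φ = 0
  have hLφ : (Kc + Λ • Cc + Λ ^ 2 • Mc).mulVec φc = 0 := by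
    rw [Matrix.add_mulVec, Matrix.add_mulVec, Matrix.smul_mulVec,
      Matrix.smul_mulVec, heigc, hCc, smul_smul]
    rw [← add_smul, ← add_smul]
    convert zero_smul ℂ (Mc.mulVec φc) using 2
    linear_combination hΛ
  -- symmetry of L
  have hLsymm : (Kc + Λ • Cc + Λ ^ 2 • Mc).IsSymm := by
    have hMs : Mc.IsSymm := hMsymm.map _
    have hKs : Kc.IsSymm := hKsymm.map _
    have hCs : Cc.IsSymm := by
      subst hC
      exact ((hMsymm.smul αR).add (hKsymm.smul βR)).map _
    exact (hKs.add (hCs.smul Λ)).add (hMs.smul (Λ ^ 2))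
  -- dot with φ kills LHS
  have hzero : φc ⬝ᵥ (Kc + Λ • Cc + Λ ^ 2 • Mc).mulVec w = 0 := by
    rw [Matrix.dotProduct_mulVec, ← Matrix.mulVec_transpose,
      hLsymm.eq, hLφ]
    simp
  have hnorm : φc ⬝ᵥ Mc.mulVec φc = 1 := by
    rw [hMc]
    have := congrArg Complex.ofReal hMnorm
    simpa [dotProduct, Complex.ofReal_sum] using this
  have hφD : φc ⬝ᵥ D = -(Λ + lamj + αR + βR * ω ^ 2) := by
    rw [hD, dotProduct_neg, Matrix.add_mulVec, Matrix.smul_mulVec,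
      dotProduct_add, dotProduct_smul, hCc, dotProduct_smul,
      hnorm]
    simp only [smul_eq_mul, mul_one]
    ring
  have key := congrArg (fun v => φc ⬝ᵥ v) hcoh
  simp only [dotProduct_add, dotProduct_smul, smul_eq_mul] at key
  rw [hzero, hφD] at key
  field_simp
  linear_combination key
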